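/- arXiv:1909.08296 — 2 statements merged into one kernel-verified Lean document; each statement's English description precedes it below -/
import Mathlib

section
/- Let n ≥ 1, γ ∈ (0,1), a ≤ 0 and μ₂ > 0. Define σ : ℝⁿ → ℝ by σ(ξ) = √μ₂·‖ξ‖·coth(√μ₂·‖ξ‖) for ξ ≠ 0 and σ(0) = 1, where coth(s) = cosh(s)/sinh(s), and define A : ℝⁿ → ℝ by A(ξ) = 1 + |a|μ‖ξ‖² + (1/γ)·√(μ/μ₂)·σ(ξ) + (1/γ²)·(μ/μ₂)·σ(ξ)². Then there exists a constant C > 0, depending only on a, γ, μ₂, such that for every μ ∈ (0,1] and every ξ ∈ ℝⁿ: 1 + (μ/γ²)‖ξ‖² ≤ A(ξ) ≤ C·(1 + √μ·‖ξ‖)². -/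
lemma coth_lb {s : ℝ} (hs : 0 < s) : s ≤ s * (Real.cosh s / Real.sinh s) := by
  have hsinh : 0 < Real.sinh s := Real.sinh_pos_iff.2 hs
  have h1 : Real.sinh s ≤ Real.cosh s := by
    nlinarith [Real.cosh_sub_sinh s, Real.exp_pos (-s)]
  have : 1 ≤ Real.cosh s / Real.sinh s := (one_le_div hsinh).2 h1
  nlinarith

lemma coth_ub {s : ℝ} (hs : 0 < s) : s * (Real.cosh s / Real.sinh s) ≤ 1 + s := by
  have hsinh : 0 < Real.sinh s := Real.sinh_pos_iff.2 hs
  have key : s * Real.cosh s ≤ (1 + s) * Real.sinh s := by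
    have h2 : 2 * s + 1 ≤ Real.exp (2 * s) := by
      have := Real.add_one_le_exp (2 * s); linarith
    have he : Real.exp s * Real.exp (-s) = 1 := by
      rw [← Real.exp_add]; simp
    have h3 : Real.exp (2 * s) = Real.exp s * Real.exp s := by
      rw [← Real.exp_add]; ring_nf
    have hc := Real.cosh_eq s
    have hsi := Real.sinh_eq s
    have hf : 0 < Real.exp (-s) := Real.exp_pos _
    nlinarith [mul_le_mul_of_nonneg_right h2 hf.le]
  rw [← mul_div_assoc, div_le_iff₀ hsinh]
  linarith

set_option maxHeartbeats 1000000 in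
/-- For `γ ∈ (0,1)`, `a ≤ 0`, `μ₂ > 0`, with `σ` the full-dispersion symbol and
`A ξ = 1 + |a|μ‖ξ‖² + (1/γ)√(μ/μ₂) σ ξ + (1/γ²)(μ/μ₂) (σ ξ)²`, there is `C > 0`,
depending only on `a, γ, μ₂`, with `1 + (μ/γ²)‖ξ‖² ≤ A ξ ≤ C (1 + √μ ‖ξ‖)²`
for all `μ ∈ (0,1]` and all `ξ`. -/
theorem stmt_6 (n : ℕ) (hn : 1 ≤ n) (γ a μ₂ : ℝ) (hγ : γ ∈ Set.Ioo (0 : ℝ) 1) (ha : a ≤ 0)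
    (hμ₂ : 0 < μ₂)
    (σ : EuclideanSpace ℝ (Fin n) → ℝ)
    (hσ : ∀ ξ : EuclideanSpace ℝ (Fin n), ξ ≠ 0 →
      σ ξ = Real.sqrt μ₂ * ‖ξ‖ *
        (Real.cosh (Real.sqrt μ₂ * ‖ξ‖) / Real.sinh (Real.sqrt μ₂ * ‖ξ‖)))
    (hσ0 : σ 0 = 1) :
    ∃ C > 0, ∀ μ ∈ Set.Ioc (0 : ℝ) 1, ∀ ξ : EuclideanSpace ℝ (Fin n),
      1 + (μ / γ ^ 2) * ‖ξ‖ ^ 2 ≤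
          1 + |a| * μ * ‖ξ‖ ^ 2 + (1 / γ) * Real.sqrt (μ / μ₂) * σ ξ
            + (1 / γ ^ 2) * (μ / μ₂) * (σ ξ) ^ 2 ∧
        1 + |a| * μ * ‖ξ‖ ^ 2 + (1 / γ) * Real.sqrt (μ / μ₂) * σ ξ
            + (1 / γ ^ 2) * (μ / μ₂) * (σ ξ) ^ 2 ≤
          C * (1 + Real.sqrt μ * ‖ξ‖) ^ 2 := by
  obtain ⟨hγ0, hγ1⟩ := hγ
  have hγ2 : (0:ℝ) < γ ^ 2 := by positivity
  have hsμ₂ : 0 < Real.sqrt μ₂ := Real.sqrt_pos.2 hμ₂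
  have hsμ₂sq : Real.sqrt μ₂ ^ 2 = μ₂ := Real.sq_sqrt hμ₂.le
  refine ⟨1 + |a| + (1/γ) * (1 / Real.sqrt μ₂ + 1) + 2 * (1/γ^2) * (1/μ₂ + 1), by positivity,
    ?_⟩
  intro μ hμ ξ
  obtain ⟨hμ0, hμ1⟩ := hμ
  have hsμ0 : 0 ≤ Real.sqrt μ := Real.sqrt_nonneg μ
  have hsμ1 : Real.sqrt μ ≤ 1 := by
    rw [show (1:ℝ) = Real.sqrt 1 by simp]
    exact Real.sqrt_le_sqrt hμ1
  have hsμsq : Real.sqrt μ ^ 2 = μ := Real.sq_sqrt hμ0.le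
  have hq : Real.sqrt (μ / μ₂) = Real.sqrt μ / Real.sqrt μ₂ := Real.sqrt_div' μ hμ₂.le ▸ by
    rw [Real.sqrt_div hμ0.le]
  have ha' : 0 ≤ |a| := abs_nonneg a
  by_cases hξ : ξ = 0
  · subst hξ
    simp only [norm_zero, hσ0]
    constructor
    · have h1 : 0 ≤ (1/γ) * Real.sqrt (μ/μ₂) := by positivity
      have h2 : 0 ≤ (1/γ^2) * (μ/μ₂) := by positivity
      nlinarith
    · have h1 : Real.sqrt (μ/μ₂) ≤ 1 / Real.sqrt μ₂ := by
        rw [hq, div_le_div_iff₀ hsμ₂ hsμ₂]; nlinarith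
      have h2 : μ / μ₂ ≤ 1 / μ₂ := by
        rw [div_le_div_iff₀ hμ₂ hμ₂]; nlinarith
      have h3 : (1/γ) * Real.sqrt (μ/μ₂) ≤ (1/γ) * (1 / Real.sqrt μ₂) := by
        apply mul_le_mul_of_nonneg_left h1; positivity
      have h4 : (1/γ^2) * (μ/μ₂) ≤ (1/γ^2) * (1/μ₂) := by
        apply mul_le_mul_of_nonneg_left h2; positivity
      have h5 : (0:ℝ) < 1/γ := by positivity
      have h6 : (0:ℝ) < 1/γ^2 := by positivity
      have h7 : (0:ℝ) ≤ 1/γ^2 * (1/μ₂) := by positivity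
      have e1 : (1/γ) * (1/Real.sqrt μ₂ + 1) = (1/γ) * (1/Real.sqrt μ₂) + 1/γ := by ring
      have e2 : 2 * (1/γ^2) * (1/μ₂ + 1) = 2 * ((1/γ^2) * (1/μ₂)) + 2 * (1/γ^2) := by ring
      linarith [h3, h4, h5, h6, h7, ha']
  · have hr : 0 < ‖ξ‖ := norm_pos_iff.2 hξ
    set r := ‖ξ‖
    have hs : 0 < Real.sqrt μ₂ * r := by positivity
    have hσval := hσ ξ hξ
    have hlb : Real.sqrt μ₂ * r ≤ σ ξ := hσval ▸ coth_lb hs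
    have hub : σ ξ ≤ 1 + Real.sqrt μ₂ * r := hσval ▸ coth_ub hs
    have hσpos : 0 ≤ σ ξ := le_trans hs.le hlb
    set x := Real.sqrt μ * r with hxdef
    have hx0 : 0 ≤ x := by positivity
    have hx2 : x ^ 2 = μ * r ^ 2 := by rw [hxdef, mul_pow, hsμsq]
    have hxr : x ≤ r := by
      calc x = Real.sqrt μ * r := rfl
      _ ≤ 1 * r := mul_le_mul_of_nonneg_right hsμ1 hr.le
      _ = r := one_mul r
    constructor
    · -- lower bound
      have hσsq : μ₂ * r ^ 2 ≤ σ ξ ^ 2 := by nlinarith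
      have h1 : 0 ≤ (1/γ) * Real.sqrt (μ/μ₂) * σ ξ := by positivity
      have h2 : (1/γ^2) * (μ * r ^ 2) ≤ (1/γ^2) * ((μ/μ₂) * σ ξ ^ 2) := by
        apply mul_le_mul_of_nonneg_left _ (by positivity)
        rw [div_mul_eq_mul_div, le_div_iff₀ hμ₂]
        nlinarith [mul_le_mul_of_nonneg_left hσsq hμ0.le]
      have h3 : 0 ≤ |a| * μ * r ^ 2 := by positivity
      have h4 : 1 / γ ^ 2 * (μ / μ₂ * σ ξ ^ 2) = 1 / γ ^ 2 * (μ / μ₂) * σ ξ ^ 2 := by ring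
      have h5 : μ / γ ^ 2 * r ^ 2 = 1 / γ ^ 2 * (μ * r ^ 2) := by ring
      rw [h4] at h2
      linarith [h1, h2, h3, h5.le, h5.ge]
    · -- upper bound
      have hT1 : (1:ℝ) ≤ (1 + x) ^ 2 := by nlinarith
      have hT2 : |a| * μ * r ^ 2 ≤ |a| * (1 + x) ^ 2 := by nlinarith
      have hcancel : Real.sqrt μ / Real.sqrt μ₂ * Real.sqrt μ₂ = Real.sqrt μ :=
        div_mul_cancel₀ _ (ne_of_gt hsμ₂)
      have hT3 : (1/γ) * Real.sqrt (μ/μ₂) * σ ξ ≤ (1/γ) * (1/Real.sqrt μ₂ + 1) * (1 + x) ^ 2 := by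
        have hb : Real.sqrt (μ/μ₂) * σ ξ ≤ 1 / Real.sqrt μ₂ + x := by
          rw [hq]
          have h1 : Real.sqrt μ / Real.sqrt μ₂ * σ ξ ≤
              Real.sqrt μ / Real.sqrt μ₂ * (1 + Real.sqrt μ₂ * r) := by
            apply mul_le_mul_of_nonneg_left hub; positivity
          have h2 : Real.sqrt μ / Real.sqrt μ₂ * (1 + Real.sqrt μ₂ * r)
              = Real.sqrt μ / Real.sqrt μ₂ + Real.sqrt μ * r := by
            field_simp
          have h3 : Real.sqrt μ / Real.sqrt μ₂ ≤ 1 / Real.sqrt μ₂ := by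
            gcongr
          linarith [h1, h2 ▸ h1]
        have hb2 : 1 / Real.sqrt μ₂ + x ≤ (1/Real.sqrt μ₂ + 1) * (1 + x) ^ 2 := by
          have : (0:ℝ) < 1 / Real.sqrt μ₂ := by positivity
          nlinarith
        have hγpos : (0:ℝ) ≤ 1/γ := by positivity
        calc (1/γ) * Real.sqrt (μ/μ₂) * σ ξ = (1/γ) * (Real.sqrt (μ/μ₂) * σ ξ) := by ring
        _ ≤ (1/γ) * ((1/Real.sqrt μ₂ + 1) * (1 + x) ^ 2) := by
            apply mul_le_mul_of_nonneg_left _ hγpos; linarith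
        _ = (1/γ) * (1/Real.sqrt μ₂ + 1) * (1 + x) ^ 2 := by ring
      have hT4 : (1/γ^2) * (μ/μ₂) * σ ξ ^ 2 ≤ 2 * (1/γ^2) * (1/μ₂ + 1) * (1 + x) ^ 2 := by
        have hs2 : (Real.sqrt μ₂ * r) ^ 2 = μ₂ * r ^ 2 := by rw [mul_pow, hsμ₂sq]
        have hσ2 : σ ξ ^ 2 ≤ 2 + 2 * (μ₂ * r ^ 2) := by
          nlinarith [mul_le_mul hub hub hσpos (by positivity : (0:ℝ) ≤ 1 + Real.sqrt μ₂ * r),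
            sq_nonneg (1 - Real.sqrt μ₂ * r), hs2]
        have hb : (μ/μ₂) * σ ξ ^ 2 ≤ 2/μ₂ + 2 * x ^ 2 := by
          have h1 : (μ/μ₂) * σ ξ ^ 2 ≤ (μ/μ₂) * (2 + 2 * (μ₂ * r ^ 2)) := by
            apply mul_le_mul_of_nonneg_left hσ2; positivity
          have h2 : (μ/μ₂) * (2 + 2 * (μ₂ * r ^ 2)) = 2 * μ / μ₂ + 2 * (μ * r ^ 2) := by
            field_simp
          have h3 : 2 * μ / μ₂ ≤ 2 / μ₂ := by
            rw [div_le_div_iff₀ hμ₂ hμ₂]; nlinarith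
          rw [hx2]; linarith [h2 ▸ h1]
        have hb2 : 2/μ₂ + 2 * x ^ 2 ≤ 2 * (1/μ₂ + 1) * (1 + x) ^ 2 := by
          have h0 : (0:ℝ) < 1/μ₂ := by positivity
          have e : 2/μ₂ = 2 * (1/μ₂) := by ring
          nlinarith [mul_nonneg h0.le hx0, mul_nonneg (mul_nonneg h0.le hx0) hx0, hx0,
            sq_nonneg x, e]
        have hγpos : (0:ℝ) ≤ 1/γ^2 := by positivity
        calc (1/γ^2) * (μ/μ₂) * σ ξ ^ 2 = (1/γ^2) * ((μ/μ₂) * σ ξ ^ 2) := by ring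
        _ ≤ (1/γ^2) * (2 * (1/μ₂ + 1) * (1 + x) ^ 2) := by
            apply mul_le_mul_of_nonneg_left _ hγpos; linarith
        _ = 2 * (1/γ^2) * (1/μ₂ + 1) * (1 + x) ^ 2 := by ring
      nlinarith [hT1, hT2, hT3, hT4]
end

section
/- Let γ ∈ (0,1), a ≤ 0, c < 0, b > 0, μ₂ > 0. Define σ : ℝ² → ℝ by σ(ξ) = √μ₂·‖ξ‖·coth(√μ₂·‖ξ‖) for ξ ≠ 0 and σ(0) = 1, where coth(s) = cosh(s)/sinh(s); define A : ℝ² → ℝ by A(ξ) = 1 + |a|μ‖ξ‖² + (1/γ)·√(μ/μ₂)·σ(ξ) + (1/γ²)·(μ/μ₂)·σ(ξ)²; and define ω₁(ξ) = A(ξ)/(γ(1 + bμ‖ξ‖²)) and ω₂(ξ) = (1−γ)(1 + |c|μ‖ξ‖²)/(1 + bμ‖ξ‖²). Then there exists a constant C > 0, depending only on γ, a, b, c, μ₂, such that for every μ ∈ (0,1] and every ξ ∈ ℝ²: 1/C ≤ ω₁(ξ) ≤ C and 1/C ≤ ω₂(ξ) ≤ C; in particular ω₁(ξ)/ω₂(ξ)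 ≤ C² and ω₂(ξ)/ω₁(ξ) ≤ C². -/
private lemma stmt8_coth_bounds (s : ℝ) (hs : 0 < s) :
    s ≤ s * (Real.cosh s / Real.sinh s) ∧ s * (Real.cosh s / Real.sinh s) ≤ 1 + s := by
  have hsinh : 0 < Real.sinh s := Real.sinh_pos_iff.mpr hs
  have h1 : Real.sinh s ≤ Real.cosh s := by
    rw [Real.sinh_eq, Real.cosh_eq]
    have := Real.exp_pos (-s); linarith
  constructor
  · have h2 : 1 ≤ Real.cosh s / Real.sinh s := (one_le_div hsinh).mpr h1
    nlinarith
  · have key : s * Real.cosh s ≤ (1 + s) * Real.sinh s := by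
      rw [Real.sinh_eq, Real.cosh_eq]
      have h2 : 2 * s + 1 ≤ Real.exp (2 * s) := by
        have := Real.add_one_le_exp (2 * s); linarith
      have h3 : Real.exp (2 * s) = Real.exp s * Real.exp s := by
        rw [← Real.exp_add]; ring_nf
      have h4 : Real.exp (-s) * Real.exp s = 1 := by
        rw [← Real.exp_add]; simp
      have h5 := Real.exp_pos s
      have h6 := Real.exp_pos (-s)
      nlinarith [mul_le_mul_of_nonneg_left h2 h6.le]
    calc s * (Real.cosh s / Real.sinh s) = s * Real.cosh s / Real.sinh s := by ring
      _ ≤ (1 + s) * Real.sinh s / Real.sinh s := div_le_div_of_nonneg_right key hsinh.le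
      _ = 1 + s := by field_simp

private lemma stmt8_A_ub (μ μ₂ γ n t aa : ℝ) (hμ0 : 0 < μ) (hμ1 : μ ≤ 1) (hμ₂ : 0 < μ₂)
    (hγ0 : 0 < γ) (hn0 : 0 ≤ n) (haa : 0 ≤ aa) (ht0 : 0 ≤ t)
    (hs2 : t ≤ 1 + Real.sqrt μ₂ * n) :
    1 + aa * μ * n ^ 2 + (1 / γ) * Real.sqrt (μ / μ₂) * t + (1 / γ ^ 2) * (μ / μ₂) * t ^ 2 ≤
      (1 + aa + (1 / γ) * (1 / Real.sqrt μ₂ + 1) + (1 / γ ^ 2) * (2 / μ₂ + 2)) *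
        (1 + μ * n ^ 2) := by
  have hsμ₂ : 0 < Real.sqrt μ₂ := Real.sqrt_pos.mpr hμ₂
  have hsq : (Real.sqrt μ₂) ^ 2 = μ₂ := Real.sq_sqrt hμ₂.le
  have hsqμ : (Real.sqrt μ) ^ 2 = μ := Real.sq_sqrt hμ0.le
  have hsd : Real.sqrt (μ / μ₂) = Real.sqrt μ / Real.sqrt μ₂ := Real.sqrt_div hμ0.le μ₂
  have hsμle : Real.sqrt μ ≤ 1 := by
    rw [show (1:ℝ) = Real.sqrt 1 by simp]
    exact Real.sqrt_le_sqrt hμ1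
  have hsμ0 : 0 ≤ Real.sqrt μ := Real.sqrt_nonneg μ
  have h3 : Real.sqrt (μ / μ₂) * t ≤ 1 / Real.sqrt μ₂ + 1 + μ * n ^ 2 := by
    have a1 : Real.sqrt (μ / μ₂) * t ≤ Real.sqrt (μ / μ₂) * (1 + Real.sqrt μ₂ * n) :=
      mul_le_mul_of_nonneg_left hs2 (Real.sqrt_nonneg _)
    have a2 : Real.sqrt (μ / μ₂) * (1 + Real.sqrt μ₂ * n)
        = Real.sqrt μ / Real.sqrt μ₂ + Real.sqrt μ * n := by
      rw [hsd]; field_simp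
    have a3 : Real.sqrt μ / Real.sqrt μ₂ ≤ 1 / Real.sqrt μ₂ :=
      div_le_div_of_nonneg_right hsμle hsμ₂.le
    have a4 : Real.sqrt μ * n ≤ 1 + μ * n ^ 2 := by
      nlinarith [sq_nonneg (Real.sqrt μ * n - 1)]
    linarith
  have h4 : (μ / μ₂) * t ^ 2 ≤ 2 / μ₂ + 2 * (μ * n ^ 2) := by
    have b1 : t ^ 2 ≤ 2 + 2 * (μ₂ * n ^ 2) := by
      nlinarith [sq_nonneg (1 - Real.sqrt μ₂ * n), mul_nonneg hsμ₂.le hn0]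
    have b2 : (μ / μ₂) * t ^ 2 ≤ (μ / μ₂) * (2 + 2 * (μ₂ * n ^ 2)) :=
      mul_le_mul_of_nonneg_left b1 (by positivity)
    have b3 : (μ / μ₂) * (2 + 2 * (μ₂ * n ^ 2)) = 2 * μ / μ₂ + 2 * (μ * n ^ 2) := by
      field_simp
    have b4 : 2 * μ / μ₂ ≤ 2 / μ₂ := div_le_div_of_nonneg_right (by linarith) hμ₂.le
    linarith
  have m3 := mul_le_mul_of_nonneg_left h3 (by positivity : (0:ℝ) ≤ 1 / γ)
  have m4 := mul_le_mul_of_nonneg_left h4 (by positivity : (0:ℝ) ≤ 1 / γ ^ 2)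
  have hx0 : 0 ≤ μ * n ^ 2 := by positivity
  nlinarith [mul_nonneg (mul_nonneg (by positivity : (0:ℝ) ≤ 1/γ)
      (by positivity : (0:ℝ) ≤ 1/Real.sqrt μ₂)) hx0,
    mul_nonneg (mul_nonneg (by positivity : (0:ℝ) ≤ 1/γ^2)
      (by positivity : (0:ℝ) ≤ 2/μ₂)) hx0,
    mul_nonneg haa hx0, hx0, haa, (by positivity : (0:ℝ) ≤ 1/γ^2)]

private lemma stmt8_A_lb (μ μ₂ γ n t : ℝ) (hμ0 : 0 < μ) (hμ₂ : 0 < μ₂) (hγ0 : 0 < γ)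
    (hγ1 : γ < 1) (ht2 : μ₂ * n ^ 2 ≤ t ^ 2) :
    μ * n ^ 2 ≤ (1 / γ ^ 2) * (μ / μ₂) * t ^ 2 := by
  have e1 : μ / μ₂ * (μ₂ * n ^ 2) ≤ μ / μ₂ * t ^ 2 :=
    mul_le_mul_of_nonneg_left ht2 (by positivity)
  have e2 : μ / μ₂ * (μ₂ * n ^ 2) = μ * n ^ 2 := by field_simp
  have hg2 : 1 ≤ 1 / γ ^ 2 := by
    rw [le_one_div (by positivity) (by positivity)]
    nlinarith
  have e3 : μ / μ₂ * t ^ 2 ≤ (1 / γ ^ 2) * (μ / μ₂ * t ^ 2) := by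
    have h0 : 0 ≤ μ / μ₂ * t ^ 2 := by positivity
    nlinarith
  calc μ * n ^ 2 = μ / μ₂ * (μ₂ * n ^ 2) := e2.symm
    _ ≤ μ / μ₂ * t ^ 2 := e1
    _ ≤ (1 / γ ^ 2) * (μ / μ₂ * t ^ 2) := e3
    _ = (1 / γ ^ 2) * (μ / μ₂) * t ^ 2 := by ring

private lemma w1_lb (γ B b x Aξ : ℝ) (hγ0 : 0 < γ) (hb : 0 < b) (hB1 : 1 ≤ B) (hBb : b ≤ B)
    (hx0 : 0 ≤ x) (hAlb : 1 + x ≤ Aξ) :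
    1 / (γ * B) ≤ Aξ / (γ * (1 + b * x)) := by
  have hB0 : 0 < B := lt_of_lt_of_le one_pos hB1
  have hden : 0 < γ * (1 + b * x) := by positivity
  rw [div_le_div_iff₀ (by positivity) hden]
  nlinarith [mul_nonneg (mul_nonneg hγ0.le (sub_nonneg.mpr hBb)) hx0,
    mul_nonneg (mul_nonneg (sub_nonneg.mpr hAlb) hγ0.le) hB0.le]

private lemma w1_ub (γ Bi K b x Aξ : ℝ) (hγ0 : 0 < γ) (hb : 0 < b) (hBi0 : 0 < Bi)
    (hBi1 : Bi ≤ 1) (hBib : Bi ≤ b) (hK0 : 0 < K) (hx0 : 0 ≤ x) (hAub : Aξ ≤ K * (1 + x)) :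
    Aξ / (γ * (1 + b * x)) ≤ K / (γ * Bi) := by
  have hden : 0 < γ * (1 + b * x) := by positivity
  rw [div_le_div_iff₀ hden (by positivity)]
  nlinarith [mul_nonneg (mul_nonneg (mul_nonneg hK0.le hγ0.le) (sub_nonneg.mpr hBib)) hx0,
    mul_nonneg (mul_nonneg hK0.le hγ0.le) (sub_nonneg.mpr hBi1),
    mul_nonneg (mul_nonneg (sub_nonneg.mpr hAub) hγ0.le) hBi0.le]

private lemma w2_lb (γ B b cc x : ℝ) (hγ0 : 0 < γ) (hγ1 : γ < 1) (hb : 0 < b) (hB1 : 1 ≤ B)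
    (hBb : b ≤ B) (hcc : 0 < cc) (hx0 : 0 ≤ x) :
    (1 - γ) * min 1 cc / B ≤ (1 - γ) * (1 + cc * x) / (1 + b * x) := by
  have hB0 : 0 < B := lt_of_lt_of_le one_pos hB1
  have h1γ : 0 < 1 - γ := by linarith
  have hm1 : min 1 cc ≤ 1 := min_le_left _ _
  have hmc : min 1 cc ≤ cc := min_le_right _ _
  rw [div_le_div_iff₀ hB0 (by positivity)]
  nlinarith [mul_nonneg h1γ.le (sub_nonneg.mpr (mul_le_mul hmc hBb hb.le hcc.le)),
    mul_nonneg (mul_nonneg h1γ.le (sub_nonneg.mpr (mul_le_mul hmc hBb hb.le hcc.le))) hx0,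
    mul_nonneg h1γ.le (sub_nonneg.mpr (hm1.trans hB1))]

private lemma w2_ub (γ Bi b cc x : ℝ) (hγ0 : 0 < γ) (hγ1 : γ < 1) (hb : 0 < b) (hBi0 : 0 < Bi)
    (hBi1 : Bi ≤ 1) (hBib : Bi ≤ b) (hcc : 0 < cc) (hx0 : 0 ≤ x) :
    (1 - γ) * (1 + cc * x) / (1 + b * x) ≤ (1 - γ) * max 1 cc / Bi := by
  have h1γ : 0 < 1 - γ := by linarith
  have hM1 : 1 ≤ max 1 cc := le_max_left _ _
  have hMc : cc ≤ max 1 cc := le_max_right _ _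
  rw [div_le_div_iff₀ (by positivity) hBi0]
  nlinarith [mul_nonneg h1γ.le (sub_nonneg.mpr (hBi1.trans hM1)),
    mul_nonneg (mul_nonneg h1γ.le
      (sub_nonneg.mpr (mul_le_mul hMc (le_refl b) hb.le (le_trans one_pos.le hM1)))) hx0,
    mul_nonneg (mul_nonneg h1γ.le (sub_nonneg.mpr (mul_le_mul_of_nonneg_left hBib hcc.le))) hx0]

/-- Uniform two-sided bounds on the symbols `ω₁, ω₂` of the diagonalized Hamiltonian
Boussinesq–Full dispersion system: for `γ ∈ (0,1)`, `a ≤ 0`, `c < 0`, `b > 0`, `μ₂ > 0`,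
there is `C > 0` (depending only on `γ, a, b, c, μ₂`) such that for all `μ ∈ (0,1]` and
all `ξ ∈ ℝ²`: `1/C ≤ ω₁ ξ ≤ C`, `1/C ≤ ω₂ ξ ≤ C`, and the ratios are bounded by `C²`. -/
theorem stmt_8 (γ a c b μ₂ : ℝ) (hγ : γ ∈ Set.Ioo (0 : ℝ) 1) (ha : a ≤ 0) (hc : c < 0)
    (hb : 0 < b) (hμ₂ : 0 < μ₂)
    (σ : EuclideanSpace ℝ (Fin 2) → ℝ)
    (hσ : ∀ ξ : EuclideanSpace ℝ (Fin 2), ξ ≠ 0 →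
      σ ξ = Real.sqrt μ₂ * ‖ξ‖ *
        (Real.cosh (Real.sqrt μ₂ * ‖ξ‖) / Real.sinh (Real.sqrt μ₂ * ‖ξ‖)))
    (hσ0 : σ 0 = 1)
    (A ω₁ ω₂ : ℝ → EuclideanSpace ℝ (Fin 2) → ℝ)
    (hA : ∀ μ : ℝ, ∀ ξ : EuclideanSpace ℝ (Fin 2),
      A μ ξ = 1 + |a| * μ * ‖ξ‖ ^ 2 + (1 / γ) * Real.sqrt (μ / μ₂) * σ ξ
        + (1 / γ ^ 2) * (μ / μ₂) * (σ ξ) ^ 2)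
    (hω₁ : ∀ μ : ℝ, ∀ ξ : EuclideanSpace ℝ (Fin 2),
      ω₁ μ ξ = A μ ξ / (γ * (1 + b * μ * ‖ξ‖ ^ 2)))
    (hω₂ : ∀ μ : ℝ, ∀ ξ : EuclideanSpace ℝ (Fin 2),
      ω₂ μ ξ = (1 - γ) * (1 + |c| * μ * ‖ξ‖ ^ 2) / (1 + b * μ * ‖ξ‖ ^ 2)) :
    ∃ C > 0, ∀ μ ∈ Set.Ioc (0 : ℝ) 1, ∀ ξ : EuclideanSpace ℝ (Fin 2),
      (1 / C ≤ ω₁ μ ξ ∧ ω₁ μ ξ ≤ C) ∧ (1 / C ≤ ω₂ μ ξ ∧ ω₂ μ ξ ≤ C) ∧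
        ω₁ μ ξ / ω₂ μ ξ ≤ C ^ 2 ∧ ω₂ μ ξ / ω₁ μ ξ ≤ C ^ 2 := by
  obtain ⟨hγ0, hγ1⟩ := hγ
  have hca : 0 < |c| := abs_pos.mpr hc.ne
  have hsμ₂ : 0 < Real.sqrt μ₂ := Real.sqrt_pos.mpr hμ₂
  set K : ℝ := 1 + |a| + (1 / γ) * (1 / Real.sqrt μ₂ + 1) + (1 / γ ^ 2) * (2 / μ₂ + 2) with hKdef
  have hK1 : 1 ≤ K := by
    have h0 : 0 ≤ |a| := abs_nonneg a
    have h1 : 0 ≤ (1 / γ) * (1 / Real.sqrt μ₂ + 1) := by positivity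
    have h2 : 0 ≤ (1 / γ ^ 2) * (2 / μ₂ + 2) := by positivity
    rw [hKdef]; linarith
  have hK0 : 0 < K := lt_of_lt_of_le one_pos hK1
  set B : ℝ := max 1 b with hB
  set Bi : ℝ := min 1 b with hBi
  have hB1 : 1 ≤ B := le_max_left _ _
  have hBb : b ≤ B := le_max_right _ _
  have hB0 : 0 < B := lt_of_lt_of_le one_pos hB1
  have hBi0 : 0 < Bi := lt_min one_pos hb
  have hBi1 : Bi ≤ 1 := min_le_left _ _
  have hBib : Bi ≤ b := min_le_right _ _
  have hmc0 : 0 < min 1 |c| := lt_min one_pos hca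
  have hmc1 : min 1 |c| ≤ 1 := min_le_left _ _
  have hmcc : min 1 |c| ≤ |c| := min_le_right _ _
  have hMc1 : 1 ≤ max 1 |c| := le_max_left _ _
  have hMcc : |c| ≤ max 1 |c| := le_max_right _ _
  have h1γ : 0 < 1 - γ := by linarith
  set L₁ : ℝ := 1 / (γ * B) with hL₁
  set U₁ : ℝ := K / (γ * Bi) with hU₁
  set L₂ : ℝ := (1 - γ) * min 1 |c| / B with hL₂
  set U₂ : ℝ := (1 - γ) * max 1 |c| / Bi with hU₂
  have hL₁0 : 0 < L₁ := by rw [hL₁]; positivity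
  have hU₁0 : 0 < U₁ := by rw [hU₁]; positivity
  have hL₂0 : 0 < L₂ := by rw [hL₂]; positivity
  have hU₂0 : 0 < U₂ := by
    rw [hU₂]
    have : 0 < max 1 |c| := lt_of_lt_of_le one_pos hMc1
    positivity
  refine ⟨max (max U₁ U₂) (max (1 / L₁) (1 / L₂)), ?_, ?_⟩
  · exact lt_of_lt_of_le hU₁0 ((le_max_left _ _).trans (le_max_left _ _))
  set C : ℝ := max (max U₁ U₂) (max (1 / L₁) (1 / L₂)) with hC
  have hC0 : 0 < C := lt_of_lt_of_le hU₁0 ((le_max_left _ _).trans (le_max_left _ _))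
  have hCL₁ : 1 / C ≤ L₁ := by
    rw [div_le_iff₀ hC0, ← div_le_iff₀' hL₁0]
    exact (le_max_left _ _).trans (le_max_right _ _)
  have hCL₂ : 1 / C ≤ L₂ := by
    rw [div_le_iff₀ hC0, ← div_le_iff₀' hL₂0]
    exact (le_max_right _ _).trans (le_max_right _ _)
  have hCU₁ : U₁ ≤ C := (le_max_left _ _).trans (le_max_left _ _)
  have hCU₂ : U₂ ≤ C := (le_max_right _ _).trans (le_max_left _ _)
  intro μ hμ ξ
  obtain ⟨hμ0, hμ1⟩ := hμ
  set n : ℝ := ‖ξ‖ with hn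
  have hn0 : 0 ≤ n := norm_nonneg ξ
  obtain ⟨hs1, hs2, hs0⟩ :
      Real.sqrt μ₂ * n ≤ σ ξ ∧ σ ξ ≤ 1 + Real.sqrt μ₂ * n ∧ 0 ≤ σ ξ := by
    rcases eq_or_ne ξ 0 with h | h
    · subst h
      simp only [norm_zero, hσ0, hn]
      norm_num
    · have hnpos : 0 < n := norm_pos_iff.mpr h
      have hspos : 0 < Real.sqrt μ₂ * n := by positivity
      obtain ⟨c1, c2⟩ := stmt8_coth_bounds _ hspos
      rw [hσ ξ h]
      exact ⟨c1, c2, le_trans hspos.le c1⟩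
  set x : ℝ := μ * n ^ 2 with hx
  have hx0 : 0 ≤ x := by positivity
  have hsq : (Real.sqrt μ₂) ^ 2 = μ₂ := Real.sq_sqrt hμ₂.le
  have ht2 : μ₂ * n ^ 2 ≤ (σ ξ) ^ 2 := by
    have h := pow_le_pow_left₀ (by positivity : 0 ≤ Real.sqrt μ₂ * n) hs1 2
    rwa [mul_pow, hsq] at h
  have hA_lb : 1 + x ≤ A μ ξ := by
    rw [hA]
    have h1 : 0 ≤ |a| * μ * n ^ 2 := by positivity
    have h2 : 0 ≤ (1 / γ) * Real.sqrt (μ / μ₂) * σ ξ := by positivity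
    have h3 := stmt8_A_lb μ μ₂ γ n (σ ξ) hμ0 hμ₂ hγ0 hγ1 ht2
    rw [hx]; linarith
  have hA_ub : A μ ξ ≤ K * (1 + x) := by
    rw [hA, hKdef, hx]
    exact stmt8_A_ub μ μ₂ γ n (σ ξ) |a| hμ0 hμ1 hμ₂ hγ0 hn0 (abs_nonneg a) hs0 hs2
  have hden : 0 < 1 + b * x := by positivity
  have hdenγ : 0 < γ * (1 + b * x) := by positivity
  -- ω₁ bounds
  have hω₁lb : L₁ ≤ ω₁ μ ξ := by
    rw [hω₁ μ ξ, ← hn, show b * μ * n ^ 2 = b * x by rw [hx]; ring, hL₁]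
    exact w1_lb γ B b x (A μ ξ) hγ0 hb hB1 hBb hx0 hA_lb
  have hω₁ub : ω₁ μ ξ ≤ U₁ := by
    rw [hω₁ μ ξ, ← hn, show b * μ * n ^ 2 = b * x by rw [hx]; ring, hU₁]
    exact w1_ub γ Bi K b x (A μ ξ) hγ0 hb hBi0 hBi1 hBib hK0 hx0 hA_ub
  -- ω₂ bounds
  have hω₂lb : L₂ ≤ ω₂ μ ξ := by
    rw [hω₂ μ ξ, ← hn, show b * μ * n ^ 2 = b * x by rw [hx]; ring,
      show |c| * μ * n ^ 2 = |c| * x by rw [hx]; ring, hL₂]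
    exact w2_lb γ B b |c| x hγ0 hγ1 hb hB1 hBb hca hx0
  have hω₂ub : ω₂ μ ξ ≤ U₂ := by
    rw [hω₂ μ ξ, ← hn, show b * μ * n ^ 2 = b * x by rw [hx]; ring,
      show |c| * μ * n ^ 2 = |c| * x by rw [hx]; ring, hU₂]
    exact w2_ub γ Bi b |c| x hγ0 hγ1 hb hBi0 hBi1 hBib hca hx0
  have r1 : 1 / C ≤ ω₁ μ ξ := le_trans hCL₁ hω₁lb
  have r2 : ω₁ μ ξ ≤ C := le_trans hω₁ub hCU₁
  have r3 : 1 / C ≤ ω₂ μ ξ := le_trans hCL₂ hω₂lb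
  have r4 : ω₂ μ ξ ≤ C := le_trans hω₂ub hCU₂
  have hCi0 : 0 < 1 / C := by positivity
  have hratio : ∀ u v : ℝ, u ≤ C → 1 / C ≤ v → u / v ≤ C ^ 2 := by
    intro u v hu hv
    calc u / v ≤ C / (1 / C) := div_le_div₀ hC0.le hu hCi0 hv
      _ = C ^ 2 := by field_simp
  exact ⟨⟨r1, r2⟩, ⟨r3, r4⟩, hratio _ _ r2 r3, hratio _ _ r4 r1⟩
end
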